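/- Let N ≥ 2 be an integer. The function g₋(p) := (1 + (N−2)p − 2√((N−1)·p·(1−p)))/N is convex on [0,1], and the function g₊(p) := (1 + (N−2)p + 2√((N−1)·p·(1−p)))/N is concave on [0,1]. Equivalently, for any finite probability weights q_λ and values p_λ ∈ [0,1], g₋(Σ_λ q_λ p_λ) ≤ Σ_λ q_λ g₋(p_λ) and g₊(Σ_λ q_λ p_λ) ≥ Σ_λ q_λ g₊(p_λ). -/
import Mathlib

open Finset

/-- `g₋(p) = (1 + (N−2)p − 2√((N−1)p(1−p)))/N`. -/
noncomputable def gMinus (N : ℕ) (p : ℝ) : ℝ :=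
  (1 + ((N : ℝ) - 2) * p - 2 * Real.sqrt (((N : ℝ) - 1) * p * (1 - p))) / (N : ℝ)

/-- `g₊(p) = (1 + (N−2)p + 2√((N−1)p(1−p)))/N`. -/
noncomputable def gPlus (N : ℕ) (p : ℝ) : ℝ :=
  (1 + ((N : ℝ) - 2) * p + 2 * Real.sqrt (((N : ℝ) - 1) * p * (1 - p))) / (N : ℝ)

lemma sqrt_comp_concave {s : Set ℝ} {f : ℝ → ℝ} (hf : ConcaveOn ℝ s f)
    (hnn : ∀ x ∈ s, 0 ≤ f x) : ConcaveOn ℝ s (fun x => Real.sqrt (f x)) := by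
  refine ⟨hf.1, fun x hx y hy a b ha hb hab => ?_⟩
  simp only [smul_eq_mul]
  have h1 : a * f x + b * f y ≤ f (a • x + b • y) := by
    have := hf.2 hx hy ha hb hab
    simpa using this
  have hu := hnn x hx
  have hv := hnn y hy
  have key : a * Real.sqrt (f x) + b * Real.sqrt (f y) ≤ Real.sqrt (a * f x + b * f y) := by
    have hnn' : 0 ≤ a * Real.sqrt (f x) + b * Real.sqrt (f y) :=
      add_nonneg (mul_nonneg ha (Real.sqrt_nonneg _)) (mul_nonneg hb (Real.sqrt_nonneg _))
    rw [show a * Real.sqrt (f x) + b * Real.sqrt (f y) =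
        Real.sqrt ((a * Real.sqrt (f x) + b * Real.sqrt (f y))^2) from
      (Real.sqrt_sq hnn').symm]
    apply Real.sqrt_le_sqrt
    have hb' : b = 1 - a := by linarith
    subst hb'
    nlinarith [Real.sq_sqrt hu, Real.sq_sqrt hv,
      mul_nonneg (mul_nonneg ha (by linarith : (0:ℝ) ≤ 1 - a))
        (sq_nonneg (Real.sqrt (f x) - Real.sqrt (f y)))]
  exact key.trans (Real.sqrt_le_sqrt h1)

lemma quad_concave {c : ℝ} (hc : 0 ≤ c) :
    ConcaveOn ℝ (Set.Icc (0:ℝ) 1) (fun p => c * p * (1 - p)) := by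
  refine ⟨convex_Icc 0 1, fun x _ y _ a b ha hb hab => ?_⟩
  simp only [smul_eq_mul]
  have hb' : b = 1 - a := by linarith
  subst hb'
  nlinarith [mul_nonneg (mul_nonneg hc (mul_nonneg ha (by linarith : (0:ℝ) ≤ 1 - a)))
    (sq_nonneg (x - y))]

lemma affine_concave (m c : ℝ) : ConcaveOn ℝ (Set.Icc (0:ℝ) 1) (fun p => m * p + c) := by
  refine ⟨convex_Icc 0 1, fun x _ y _ a b ha hb hab => ?_⟩
  simp only [smul_eq_mul]
  have hb' : b = 1 - a := by linarith
  subst hb'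
  apply le_of_eq; ring

lemma affine_convex (m c : ℝ) : ConvexOn ℝ (Set.Icc (0:ℝ) 1) (fun p => m * p + c) := by
  refine ⟨convex_Icc 0 1, fun x _ y _ a b ha hb hab => ?_⟩
  simp only [smul_eq_mul]
  have hb' : b = 1 - a := by linarith
  subst hb'
  apply le_of_eq; ring

lemma gPlus_concaveOn (N : ℕ) (hN : 2 ≤ N) :
    ConcaveOn ℝ (Set.Icc (0:ℝ) 1) (gPlus N) := by
  have hN1 : (0:ℝ) ≤ (N:ℝ) - 1 := by
    have : (2:ℝ) ≤ (N:ℝ) := by exact_mod_cast hN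
    linarith
  have hNpos : (0:ℝ) < (N:ℝ) := by
    have : (2:ℝ) ≤ (N:ℝ) := by exact_mod_cast hN
    linarith
  have hq := quad_concave hN1
  have hs := sqrt_comp_concave hq (fun x hx => by
    have h1 : 0 ≤ x := hx.1
    have h2 : x ≤ 1 := hx.2
    have : 0 ≤ 1 - x := by linarith
    positivity)
  have haff := affine_concave (((N:ℝ) - 2) / N) (1 / N)
  have := haff.add (hs.smul (by positivity : (0:ℝ) ≤ 2 / N))
  have heq : gPlus N = (fun p => ((N:ℝ) - 2) / N * p + 1 / N) +
      (fun p => (2 / (N:ℝ)) • Real.sqrt (((N:ℝ) - 1) * p * (1 - p))) := by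
    funext p
    simp only [gPlus, Pi.add_apply, smul_eq_mul]
    field_simp
    ring
  rw [heq]
  exact this

lemma gMinus_convexOn (N : ℕ) (hN : 2 ≤ N) :
    ConvexOn ℝ (Set.Icc (0:ℝ) 1) (gMinus N) := by
  have hNpos : (0:ℝ) < (N:ℝ) := by
    have : (2:ℝ) ≤ (N:ℝ) := by exact_mod_cast hN
    linarith
  have haff := affine_convex (2 * ((N:ℝ) - 2) / N) (2 / N)
  have := haff.add (gPlus_concaveOn N hN).neg
  have heq : gMinus N = (fun p => 2 * ((N:ℝ) - 2) / N * p + 2 / N) + (-(gPlus N)) := by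
    funext p
    simp only [gMinus, gPlus, Pi.add_apply, Pi.neg_apply]
    field_simp
    ring
  rw [heq]
  exact this

theorem gMinus_convex_gPlus_concave (N : ℕ) (hN : 2 ≤ N) :
    ConvexOn ℝ (Set.Icc (0 : ℝ) 1) (gMinus N) ∧
    ConcaveOn ℝ (Set.Icc (0 : ℝ) 1) (gPlus N) ∧
    -- equivalently, the finite Jensen inequalities
    (∀ (Λ : Type) [Fintype Λ], ∀ q : Λ → ℝ, (∀ l, 0 ≤ q l) → ∑ l, q l = 1 →
      ∀ p : Λ → ℝ, (∀ l, p l ∈ Set.Icc (0 : ℝ) 1) →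
        gMinus N (∑ l, q l * p l) ≤ ∑ l, q l * gMinus N (p l)) ∧
    (∀ (Λ : Type) [Fintype Λ], ∀ q : Λ → ℝ, (∀ l, 0 ≤ q l) → ∑ l, q l = 1 →
      ∀ p : Λ → ℝ, (∀ l, p l ∈ Set.Icc (0 : ℝ) 1) →
        ∑ l, q l * gPlus N (p l) ≤ gPlus N (∑ l, q l * p l)) := by
  have hcv := gMinus_convexOn N hN
  have hcc := gPlus_concaveOn N hN
  refine ⟨hcv, hcc, ?_, ?_⟩
  · intro Λ _ q hq hq1 p hp
    have := hcv.map_sum_le (t := Finset.univ) (fun l _ => hq l) hq1 (fun l _ => hp l)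
    simpa [smul_eq_mul] using this
  · intro Λ _ q hq hq1 p hp
    have := hcc.le_map_sum (t := Finset.univ) (fun l _ => hq l) hq1 (fun l _ => hp l)
    simpa [smul_eq_mul] using this
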